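/- arXiv:1703.06116 — 4 statements merged into one kernel-verified Lean document; each statement's English description precedes it below -/
import Mathlib

section
/- Let m ≥ 1 and let B₁, B₂ : [0,∞) → ℝ^{m×m} be bounded and piecewise continuous matrix-valued functions. Suppose M : [0,∞) → ℝ^{m×m} is differentiable and satisfies the matrix ODE M'(t) = B₁(t) + M(t)B₂(t) + B₂(t)ᵀM(t) with M(0) = M₀. If M₀ is symmetric positive definite and B₁(t) is symmetric positive semidefinite for every t ≥ 0, then M(t) is symmetric and positive definite for every t ≥ 0. -/
open Matrix

/-- A matrix-valued function is piecewise continuous on `[0, ∞)` if on every compact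
interval `[0, T]` it is continuous except possibly at finitely many points. -/
def PiecewiseContinuousMat {m : ℕ} (B : ℝ → Matrix (Fin m) (Fin m) ℝ) : Prop :=
  ∀ T : ℝ, 0 < T → ∃ s : Finset ℝ,
    ∀ t ∈ Set.Icc (0:ℝ) T, t ∉ s → ∀ i j, ContinuousAt (fun u => B u i j) t

/-! `Mᵀ` solves the same linear equation as `M` because `B₁` is symmetric, so `Mᵀ = M` by
uniqueness of solutions. As long as `M` stays positive definite, Jacobi's formula gives
`(det M)' = tr (adj M * B₁) + 2 det M * tr B₂ ≥ -2mC det M`, because `adj M` and `B₁` are positive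
semidefinite; hence `det M t ≥ det M₀ * exp (-2mCt) > 0`. At the first time at which `M` fails to
be positive definite, `M` would be a positive semidefinite limit with positive determinant, hence
positive definite, and positive definiteness is an open condition on symmetric matrices. -/

open Set Filter Topology
open scoped ComplexOrder

namespace Matrix

variable {n : Type*} [Fintype n]

section Norm

attribute [local instance] Matrix.seminormedAddCommGroup

theorem norm_mul_le_card_mul {l m α : Type*} [Fintype l] [Fintype m] [NonUnitalSeminormedRing α]
    (A : Matrix l m α) (B : Matrix m n α) : ‖A * B‖ ≤ Fintype.card m * (‖A‖ * ‖B‖) := by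
  refine (norm_le_iff (by positivity)).2 fun i j => ?_
  calc ‖(A * B) i j‖ ≤ ∑ k, ‖A i k * B k j‖ := norm_sum_le _ _
    _ ≤ ∑ _k : m, ‖A‖ * ‖B‖ := Finset.sum_le_sum fun k _ =>
        (norm_mul_le _ _).trans (mul_le_mul (norm_entry_le_entrywise_sup_norm A)
          (norm_entry_le_entrywise_sup_norm B) (norm_nonneg _) (norm_nonneg _))
    _ = Fintype.card m * (‖A‖ * ‖B‖) := by simp

theorem norm_trace_le {α : Type*} [SeminormedAddCommGroup α] (A : Matrix n n α) :
    ‖A.trace‖ ≤ Fintype.card n * ‖A‖ := by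
  calc ‖A.trace‖ ≤ ∑ i, ‖A i i‖ := norm_sum_le _ _
    _ ≤ ∑ _i : n, ‖A‖ := Finset.sum_le_sum fun i _ => norm_entry_le_entrywise_sup_norm A
    _ = Fintype.card n * ‖A‖ := by simp

theorem lipschitzWith_add_mul_add_transpose_mul {C : ℝ} (B₁ : Matrix n n ℝ) {B₂ : Matrix n n ℝ}
    (hB₂ : ‖B₂‖ ≤ C) :
    LipschitzWith (2 * Fintype.card n * C).toNNReal fun X => B₁ + X * B₂ + B₂ᵀ * X := by
  refine LipschitzWith.of_dist_le_mul fun X Y => ?_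
  rw [dist_eq_norm, dist_eq_norm, Real.coe_toNNReal _ (by positivity [(norm_nonneg B₂).trans hB₂])]
  calc ‖B₁ + X * B₂ + B₂ᵀ * X - (B₁ + Y * B₂ + B₂ᵀ * Y)‖ = ‖(X - Y) * B₂ + B₂ᵀ * (X - Y)‖ := by
        rw [sub_mul, Matrix.mul_sub]; abel_nf
    _ ≤ Fintype.card n * (‖X - Y‖ * ‖B₂‖) + Fintype.card n * (‖B₂ᵀ‖ * ‖X - Y‖) :=
        (norm_add_le _ _).trans (add_le_add (norm_mul_le_card_mul _ _) (norm_mul_le_card_mul _ _))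
    _ ≤ 2 * Fintype.card n * C * ‖X - Y‖ := by
        rw [norm_transpose]
        have := mul_le_mul_of_nonneg_left hB₂ (by positivity : (0:ℝ) ≤ Fintype.card n * ‖X - Y‖)
        linarith

end Norm

theorem sum_det_updateRow_eq_trace_adjugate_mul [DecidableEq n] {R : Type*} [CommRing R]
    (A B : Matrix n n R) : ∑ i, (A.updateRow i (B i)).det = (adjugate A * B).trace := by
  simp only [← cramer_transpose_apply, cramer_eq_adjugate_mulVec, ← adjugate_transpose, trace,
    diag, mul_apply, mulVec, dotProduct, transpose_apply]
  exact Finset.sum_comm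

theorem trace_adjugate_mul_add_mul_add_transpose_mul [DecidableEq n] {R : Type*} [CommRing R]
    (A B₁ B₂ : Matrix n n R) :
    (adjugate A * (B₁ + A * B₂ + B₂ᵀ * A)).trace
      = (adjugate A * B₁).trace + 2 * A.det * B₂.trace := by
  rw [Matrix.mul_add, Matrix.mul_add, trace_add, trace_add, ← Matrix.mul_assoc (adjugate A) A,
    adjugate_mul, trace_mul_comm (adjugate A) (B₂ᵀ * A), Matrix.mul_assoc, mul_adjugate,
    Matrix.mul_smul, smul_mul, Matrix.mul_one, Matrix.one_mul, trace_smul, trace_smul,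
    trace_transpose, smul_eq_mul]
  ring

variable {𝕜 : Type*} [RCLike 𝕜]

open scoped MatrixOrder in
theorem PosSemidef.trace_mul_nonneg {A B : Matrix n n 𝕜} (hA : A.PosSemidef)
    (hB : B.PosSemidef) : 0 ≤ (A * B).trace := by
  classical
  obtain ⟨C, rfl⟩ := CStarAlgebra.nonneg_iff_eq_star_mul_self.mp hA.nonneg
  rw [Matrix.mul_assoc, trace_mul_comm]
  exact (hB.mul_mul_conjTranspose_same C).trace_nonneg

theorem PosDef.adjugate [DecidableEq n] {A : Matrix n n 𝕜} (hA : A.PosDef) :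
    A.adjugate.PosDef := by
  have h : A.adjugate = A.det • A⁻¹ := by
    rw [inv_def, smul_smul, Ring.inverse_eq_inv', mul_inv_cancel₀ hA.det_pos.ne', one_smul]
  exact h ▸ hA.inv.smul hA.det_pos

theorem isClosed_setOf_posSemidef : IsClosed {A : Matrix n n ℝ | A.PosSemidef} := by
  simp only [posSemidef_iff_dotProduct_mulVec, ofPred_and, ofPred_forall]
  exact (isClosed_eq continuous_id.matrix_conjTranspose continuous_id).inter <|
    isClosed_iInter fun x => isClosed_le continuous_const <|
      continuous_const.dotProduct (continuous_id.matrix_mulVec continuous_const)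

theorem PosDef.eventually_isHermitian_imp_posDef {A : Matrix n n ℝ} (hA : A.PosDef) :
    ∀ᶠ B in 𝓝 A, B.IsHermitian → B.PosDef := by
  have hquad : Continuous fun p : Matrix n n ℝ × (n → ℝ) => p.2 ⬝ᵥ (p.1 *ᵥ p.2) :=
    continuous_snd.dotProduct (continuous_fst.matrix_mulVec continuous_snd)
  have hsphere : ∀ᶠ B in 𝓝 A, ∀ v ∈ Metric.sphere (0 : n → ℝ) 1, 0 < v ⬝ᵥ (B *ᵥ v) :=
    (isCompact_sphere 0 1).eventually_forall_of_forall_eventually fun v hv =>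
      hquad.continuousAt.eventually (lt_mem_nhds <| by
        simpa using hA.dotProduct_mulVec_pos (ne_zero_of_mem_unit_sphere ⟨v, hv⟩))
  filter_upwards [hsphere] with B hB hBh
  refine .of_dotProduct_mulVec_pos hBh fun x hx => ?_
  have hx' : 0 < ‖x‖ := norm_pos_iff.2 hx
  have := hB (‖x‖⁻¹ • x) (by simp [norm_smul, hx'.ne'])
  rw [mulVec_smul, dotProduct_smul, smul_dotProduct, smul_smul, smul_eq_mul] at this
  simpa using pos_of_mul_pos_right this (by positivity)

section Derivative

attribute [local instance] Matrix.normedAddCommGroup Matrix.normedSpace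

variable {m 𝕜 : Type*} [Fintype m] [NontriviallyNormedField 𝕜]

theorem _root_.HasDerivWithinAt.matrix_transpose {A : 𝕜 → Matrix m n 𝕜} {A' : Matrix m n 𝕜}
    {s : Set 𝕜} {x : 𝕜} (h : HasDerivWithinAt A A' s x) :
    HasDerivWithinAt (fun t => (A t)ᵀ) A'ᵀ s x :=
  hasDerivWithinAt_pi.2 fun i => hasDerivWithinAt_pi.2 fun j =>
    hasDerivWithinAt_pi.1 (hasDerivWithinAt_pi.1 h j) i

theorem _root_.HasDerivAt.matrix_det [DecidableEq n] {A : 𝕜 → Matrix n n 𝕜} {A' : Matrix n n 𝕜}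
    {x : 𝕜} (h : HasDerivAt A A' x) :
    HasDerivAt (fun t => (A t).det) (adjugate (A x) * A').trace x := by
  let D : ContinuousMultilinearMap 𝕜 (fun _ : n => n → 𝕜) 𝕜 :=
    ⟨detRowAlternating.toMultilinearMap, continuous_id.matrix_det⟩
  refine ((D.hasFDerivAt (A x)).comp_hasDerivAt x h).congr_deriv ?_
  exact (D.linearDeriv_apply (A x) A').trans (sum_det_updateRow_eq_trace_adjugate_mul (A x) A')

end Derivative

end Matrix

theorem forall_ge_of_continuous_induction {P : ℝ → Prop} {a : ℝ} (ha : P a)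
    (hleft : ∀ t > a, (∀ s ∈ Ico a t, P s) → P t)
    (hright : ∀ t ≥ a, P t → ∀ᶠ s in 𝓝[>] t, P s) : ∀ t ≥ a, P t := by
  by_contra! ⟨t, hat, ht⟩
  set S := {s | a ≤ s ∧ ¬P s}
  have hS : S.Nonempty := ⟨t, hat, ht⟩
  have hbdd : BddBelow S := ⟨a, fun s hs => hs.1⟩
  have haT : a ≤ sInf S := le_csInf hS fun s hs => hs.1
  have hbelow : ∀ s ∈ Ico a (sInf S), P s := fun s hs =>
    by_contra fun h => (csInf_le hbdd ⟨hs.1, h⟩).not_gt hs.2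
  have hT : P (sInf S) := haT.eq_or_lt.elim (fun h => h ▸ ha) fun h => hleft _ h hbelow
  obtain ⟨u, hu, hPu⟩ := mem_nhdsGT_iff_exists_Ioo_subset.1 (hright _ haT hT)
  obtain ⟨s, hsS, hsu⟩ := exists_lt_of_csInf_lt hS hu
  have hTs : sInf S < s := (csInf_le hbdd hsS).lt_of_ne fun h => hsS.2 (h ▸ hT)
  exact hsS.2 (hPu ⟨hTs, hsu⟩)

attribute [local instance] Matrix.normedAddCommGroup Matrix.normedSpace

section LyapunovEquation

variable {n : Type*} [Fintype n] {B₁ B₂ M : ℝ → Matrix n n ℝ} {C : ℝ}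

theorem transpose_eq_self_of_hasDerivWithinAt (hB₁ : ∀ t ≥ 0, (B₁ t)ᵀ = B₁ t)
    (hB₂ : ∀ t ≥ 0, ‖B₂ t‖ ≤ C)
    (hM : ∀ t ≥ 0, HasDerivWithinAt M (B₁ t + M t * B₂ t + (B₂ t)ᵀ * M t) (Ici 0) t)
    (h0 : (M 0)ᵀ = M 0) {t : ℝ} (ht : 0 ≤ t) : (M t)ᵀ = M t := by
  have hMt : ∀ s ≥ 0, HasDerivWithinAt (fun u => (M u)ᵀ)
      (B₁ s + (M s)ᵀ * B₂ s + (B₂ s)ᵀ * (M s)ᵀ) (Ici 0) s := fun s hs => by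
    convert (hM s hs).matrix_transpose using 1
    rw [transpose_add, transpose_add, transpose_mul, transpose_mul, transpose_transpose, hB₁ s hs]
    abel
  have hcont : ∀ {f : ℝ → Matrix n n ℝ} {f' : ℝ → Matrix n n ℝ},
      (∀ s ≥ 0, HasDerivWithinAt f (f' s) (Ici 0) s) → ContinuousOn f (Icc 0 t) :=
    fun hf s hs => (hf s hs.1).continuousWithinAt.mono Icc_subset_Ici_self
  have hderiv : ∀ {f : ℝ → Matrix n n ℝ} {f' : ℝ → Matrix n n ℝ},
      (∀ s ≥ 0, HasDerivWithinAt f (f' s) (Ici 0) s) →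
        ∀ s ∈ Ico 0 t, HasDerivWithinAt f (f' s) (Ici s) s :=
    fun hf s hs => (hf s hs.1).mono (Ici_subset_Ici.2 hs.1)
  exact ODE_solution_unique_of_mem_Icc_right (s := fun _ => univ)
    (fun s hs => (lipschitzWith_add_mul_add_transpose_mul (B₁ s) (hB₂ s hs.1)).lipschitzOnWith)
    (hcont hMt) (hderiv hMt) (fun _ _ => mem_univ _) (hcont hM) (hderiv hM)
    (fun _ _ => mem_univ _) h0 ⟨ht, le_rfl⟩

theorem monotoneOn_det_mul_exp_of_hasDerivWithinAt [DecidableEq n]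
    (hB₁ : ∀ t ≥ 0, (B₁ t).PosSemidef)
    (hB₂ : ∀ t ≥ 0, ‖B₂ t‖ ≤ C)
    (hM : ∀ t ≥ 0, HasDerivWithinAt M (B₁ t + M t * B₂ t + (B₂ t)ᵀ * M t) (Ici 0) t) {T : ℝ}
    (hpos : ∀ t ∈ Ioo 0 T, (M t).PosDef) :
    MonotoneOn (fun t => (M t).det * Real.exp (2 * Fintype.card n * C * t)) (Icc 0 T) := by
  set K := 2 * Fintype.card n * C
  have hderiv : ∀ t > 0, HasDerivAt (fun t => (M t).det * Real.exp (K * t))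
      ((((M t).adjugate * (B₁ t + M t * B₂ t + (B₂ t)ᵀ * M t)).trace + K * (M t).det)
        * Real.exp (K * t)) t := fun t ht =>
    (((hM t ht.le).hasDerivAt (Ici_mem_nhds ht)).matrix_det.mul
      ((hasDerivAt_id' t).const_mul K).exp).congr_deriv (by ring)
  refine monotoneOn_of_hasDerivWithinAt_nonneg (convex_Icc 0 T) ?_
    (fun t ht => (hderiv t (interior_Icc.subset ht).1).hasDerivWithinAt) fun t ht => ?_
  · exact (continuous_id.matrix_det.comp_continuousOn
      fun t ht => (hM t ht.1).continuousWithinAt.mono Icc_subset_Ici_self).mul (by fun_prop)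
  replace ht := interior_Icc.subset ht
  have hB₁adj := (hB₁ t ht.1.le).trace_mul_nonneg ((hpos t ht).adjugate.posSemidef)
  have htr : -(Fintype.card n * C) ≤ (B₂ t).trace := neg_le_of_abs_le <|
    (norm_trace_le (B₂ t)).trans (mul_le_mul_of_nonneg_left (hB₂ t ht.1.le) (by positivity))
  have hdet := (hpos t ht).det_pos
  rw [trace_adjugate_mul_add_mul_add_transpose_mul, trace_mul_comm]
  refine mul_nonneg ?_ (Real.exp_pos _).le
  nlinarith

theorem posDef_of_hasDerivWithinAt_of_forall_Ico [DecidableEq n]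
    (hB₁ : ∀ t ≥ 0, (B₁ t).PosSemidef)
    (hB₂ : ∀ t ≥ 0, ‖B₂ t‖ ≤ C)
    (hM : ∀ t ≥ 0, HasDerivWithinAt M (B₁ t + M t * B₂ t + (B₂ t)ᵀ * M t) (Ici 0) t) {T : ℝ}
    (hT : 0 < T) (hbefore : ∀ t ∈ Ico 0 T, (M t).PosDef) : (M T).PosDef := by
  have hpsd : (M T).PosSemidef := by
    have hcont := ((hM T hT.le).hasDerivAt (Ici_mem_nhds hT)).continuousAt
    exact isClosed_setOf_posSemidef.mem_of_tendsto (hcont.tendsto.mono_left nhdsWithin_le_nhds)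
      (mem_of_superset (Ico_mem_nhdsLT hT) fun t ht => (hbefore t ht).posSemidef)
  have hmono := monotoneOn_det_mul_exp_of_hasDerivWithinAt hB₁ hB₂ hM
    fun t ht => hbefore t ⟨ht.1.le, ht.2⟩
  have hdet : 0 < (M T).det * Real.exp (2 * Fintype.card n * C * T) := by
    refine (hbefore 0 ⟨le_rfl, hT⟩).det_pos.trans_le ?_
    simpa using hmono ⟨le_rfl, hT.le⟩ ⟨hT.le, le_rfl⟩ hT.le
  exact hpsd.posDef_iff_det_ne_zero.2 (pos_of_mul_pos_left hdet (Real.exp_pos _).le).ne'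

end LyapunovEquation

theorem matrix_ode_posDef_general {m : ℕ}
    (B₁ B₂ : ℝ → Matrix (Fin m) (Fin m) ℝ)
    (M : ℝ → Matrix (Fin m) (Fin m) ℝ) (M₀ : Matrix (Fin m) (Fin m) ℝ)
    (hB₂bdd : ∃ C : ℝ, ∀ t ≥ (0:ℝ), ∀ i j, |B₂ t i j| ≤ C)
    (hode : ∀ t ≥ (0:ℝ), ∀ i j, HasDerivWithinAt (fun s => M s i j)
      ((B₁ t + M t * B₂ t + (B₂ t)ᵀ * M t) i j) (Set.Ici 0) t)
    (hM0 : M 0 = M₀)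
    (hM₀pos : M₀.PosDef)
    (hB₁pos : ∀ t ≥ (0:ℝ), (B₁ t).PosSemidef) :
    ∀ t ≥ (0:ℝ), (M t).IsSymm ∧ (M t).PosDef := by
  obtain ⟨C, hC⟩ := hB₂bdd
  have hB₂ : ∀ t ≥ 0, ‖B₂ t‖ ≤ max C 0 := fun t ht =>
    (norm_le_iff (le_max_right C 0)).2 fun i j => (hC t ht i j).trans (le_max_left C 0)
  have hM : ∀ t ≥ 0, HasDerivWithinAt M (B₁ t + M t * B₂ t + (B₂ t)ᵀ * M t) (Ici 0) t :=
    fun t ht => hasDerivWithinAt_pi.2 fun i => hasDerivWithinAt_pi.2 (hode t ht i)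
  have hsymm : ∀ t ≥ 0, (M t).IsSymm := fun t ht =>
    transpose_eq_self_of_hasDerivWithinAt
      (fun s hs => isHermitian_iff_isSymm.1 (hB₁pos s hs).isHermitian) hB₂ hM
      (hM0 ▸ isHermitian_iff_isSymm.1 hM₀pos.isHermitian) ht
  refine fun t ht => ⟨hsymm t ht, ?_⟩
  refine forall_ge_of_continuous_induction (hM0 ▸ hM₀pos)
    (fun T hT hbefore => posDef_of_hasDerivWithinAt_of_forall_Ico hB₁pos hB₂ hM hT hbefore)
    (fun T hT hPD => ?_) t ht
  have hnear := ((hM T hT).continuousWithinAt.mono fun s (hs : T < s) => hT.trans hs.le).eventually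
    hPD.eventually_isHermitian_imp_posDef
  filter_upwards [hnear, self_mem_nhdsWithin] with s hs hTs
  exact hs (isHermitian_iff_isSymm.2 (hsymm s (hT.trans hTs.le)))

/-- If `M' = B₁ + M B₂ + B₂ᵀ M`, `M(0) = M₀` is symmetric positive definite, `B₁, B₂` are
bounded and piecewise continuous, and `B₁(t)` is symmetric positive semidefinite for all
`t ≥ 0`, then `M(t)` is symmetric positive definite for all `t ≥ 0`. -/
theorem matrix_ode_posDef {m : ℕ} (hm : 1 ≤ m)
    (B₁ B₂ : ℝ → Matrix (Fin m) (Fin m) ℝ)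
    (M : ℝ → Matrix (Fin m) (Fin m) ℝ) (M₀ : Matrix (Fin m) (Fin m) ℝ)
    (hB₁bdd : ∃ C : ℝ, ∀ t ≥ (0:ℝ), ∀ i j, |B₁ t i j| ≤ C)
    (hB₂bdd : ∃ C : ℝ, ∀ t ≥ (0:ℝ), ∀ i j, |B₂ t i j| ≤ C)
    (hB₁pc : PiecewiseContinuousMat B₁) (hB₂pc : PiecewiseContinuousMat B₂)
    (hode : ∀ t ≥ (0:ℝ), ∀ i j, HasDerivWithinAt (fun s => M s i j)
      ((B₁ t + M t * B₂ t + (B₂ t)ᵀ * M t) i j) (Set.Ici 0) t)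
    (hM0 : M 0 = M₀)
    (hM₀symm : M₀.IsSymm) (hM₀pos : M₀.PosDef)
    (hB₁symm : ∀ t ≥ (0:ℝ), (B₁ t).IsSymm)
    (hB₁pos : ∀ t ≥ (0:ℝ), (B₁ t).PosSemidef) :
    ∀ t ≥ (0:ℝ), (M t).IsSymm ∧ (M t).PosDef :=
  matrix_ode_posDef_general B₁ B₂ M M₀ hB₂bdd hode hM0 hM₀pos hB₁pos
end

section
/- Let m ≥ 1 and let B : [0,∞) → ℝ^{m×m} be continuous and bounded. Suppose M : [0,∞) → ℝ^{m×m} is differentiable and satisfies M'(t) = −M(t)B(t) − B(t)ᵀM(t) with M(0) = M₀ symmetric positive definite. Then M(t) is symmetric and positive definite for every t ≥ 0. -/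
/-!
The equation is linear in `M` and invariant under transposition, so `M - Mᵀ` solves it with
initial value `0` and vanishes by Grönwall's inequality. Jacobi's formula gives
`(det M)' = -2 tr B · det M`, whence `det M(t) = det M₀ · exp (-2 ∫₀ᵗ tr B) ≠ 0`. Finally, a
continuous path of invertible symmetric matrices cannot leave the positive definite cone: the
minimum of the quadratic form on the unit sphere depends continuously on the matrix, and where it
vanishes the matrix is positive semidefinite and singular.
-/

open Matrix Set Real

namespace Matrix

variable {n R : Type*} [Fintype n] [DecidableEq n] [CommRing R]

theorem det_updateCol_eq_sum_perm (A : Matrix n n R) (i : n) (c : n → R) :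
    (A.updateCol i c).det =
      ∑ σ : Equiv.Perm n, ((Equiv.Perm.sign σ : ℤ) : R) *
        (c (σ i) * ∏ j ∈ Finset.univ.erase i, A (σ j) j) := by
  rw [det_apply']
  refine Finset.sum_congr rfl fun σ _ => ?_
  rw [← Finset.mul_prod_erase _ _ (Finset.mem_univ i), updateCol_self]
  congr 2
  exact Finset.prod_congr rfl fun j hj => updateCol_ne (Finset.ne_of_mem_erase hj)

theorem sum_det_updateCol_eq_trace_adjugate_mul (A F : Matrix n n R) :
    ∑ i, (A.updateCol i fun k => F k i).det = trace (adjugate A * F) := by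
  simp only [← cramer_apply, cramer_eq_adjugate_mulVec, trace, diag, mul_apply, mulVec,
    dotProduct]

theorem trace_adjugate_mul_mul (A B : Matrix n n R) :
    trace (adjugate A * (A * B)) = A.det * trace B := by
  rw [← Matrix.mul_assoc, adjugate_mul, smul_mul, Matrix.one_mul, trace_smul, smul_eq_mul]

theorem trace_adjugate_mul_mul_self (A B : Matrix n n R) :
    trace (adjugate A * (B * A)) = A.det * trace B := by
  rw [← Matrix.mul_assoc, trace_mul_cycle, mul_adjugate, smul_mul, Matrix.one_mul, trace_smul,
    smul_eq_mul]

end Matrix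

section Calculus

variable {n : Type*} [Fintype n]

open scoped Matrix.Norms.Operator in
theorem hasDerivWithinAt_matrix_iff {f : ℝ → Matrix n n ℝ} {f' : Matrix n n ℝ} {s : Set ℝ}
    {t : ℝ} : HasDerivWithinAt f f' s t ↔ ∀ i j, HasDerivWithinAt (fun u => f u i j) (f' i j) s t :=
  hasDerivWithinAt_pi.trans (forall_congr' fun _ => hasDerivWithinAt_pi)

theorem hasDerivWithinAt_det [DecidableEq n] {f : ℝ → Matrix n n ℝ} {f' : Matrix n n ℝ}
    {s : Set ℝ} {t : ℝ} (h : ∀ i j, HasDerivWithinAt (fun u => f u i j) (f' i j) s t) :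
    HasDerivWithinAt (fun u => (f u).det) (trace (adjugate (f t) * f')) s t := by
  have hLeibniz := HasDerivWithinAt.fun_sum fun σ (_ : σ ∈ Finset.univ) =>
    (HasDerivWithinAt.fun_finsetProd fun i (_ : i ∈ Finset.univ) => h (σ i) i).const_mul
      ((Equiv.Perm.sign σ : ℤ) : ℝ)
  simp only [← det_apply'] at hLeibniz
  refine hLeibniz.congr_deriv ?_
  simp only [← sum_det_updateCol_eq_trace_adjugate_mul, det_updateCol_eq_sum_perm,
    Finset.mul_sum, smul_eq_mul]
  rw [Finset.sum_comm]
  exact Finset.sum_congr rfl fun σ _ => Finset.sum_congr rfl fun i _ => by ring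

end Calculus

theorem eq_mul_exp_integral_of_hasDerivWithinAt {c d : ℝ → ℝ} (hc : Continuous c)
    (hd : ∀ t ≥ 0, HasDerivWithinAt d (c t * d t) (Ici 0) t) {t : ℝ} (ht : 0 ≤ t) :
    d t = d 0 * exp (∫ s in (0:ℝ)..t, c s) := by
  set I : ℝ → ℝ := fun u => ∫ s in (0:ℝ)..u, c s
  have hI : ∀ u, HasDerivAt I (c u) u := fun u =>
    intervalIntegral.integral_hasDerivAt_right (hc.intervalIntegrable _ _)
      hc.aestronglyMeasurable.stronglyMeasurableAtFilter hc.continuousAt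
  have hg : ∀ u ≥ 0, HasDerivWithinAt (fun u => d u * exp (-I u)) 0 (Ici 0) u := by
    intro u hu
    exact ((hd u hu).mul (hI u).neg.exp.hasDerivWithinAt).congr_deriv (by ring)
  have hconst := constant_of_has_deriv_right_zero
    (fun u hu => (hg u hu.1).continuousWithinAt.mono Icc_subset_Ici_self)
    (fun u hu => (hg u hu.1).mono (Ici_subset_Ici.2 hu.1)) t ⟨ht, le_rfl⟩
  simp only [I, intervalIntegral.integral_same, neg_zero, exp_zero, mul_one] at hconst
  rw [← hconst, mul_assoc, ← exp_add, neg_add_cancel, exp_zero, mul_one]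

theorem eq_zero_of_hasDerivWithinAt_neg_mul_sub_mul {A : Type*} [NormedRing A] [NormedSpace ℝ A]
    {N P Q : ℝ → A} (hP : Continuous P) (hQ : Continuous Q)
    (hN : ∀ t ≥ 0, HasDerivWithinAt N (-(N t * P t) - Q t * N t) (Ici 0) t) (h0 : N 0 = 0)
    {t : ℝ} (ht : 0 ≤ t) : N t = 0 := by
  obtain ⟨K, hK⟩ := isCompact_Icc.exists_bound_of_continuousOn
    (hP.norm.add hQ.norm).continuousOn (s := Icc 0 t)
  refine eq_zero_of_abs_deriv_le_mul_abs_self_of_eq_zero_right (K := K)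
    (fun u hu => (hN u hu.1).continuousWithinAt.mono Icc_subset_Ici_self)
    (fun u hu => (hN u hu.1).mono (Ici_subset_Ici.2 hu.1)) h0 (fun u hu => ?_) t ⟨ht, le_rfl⟩
  calc ‖-(N u * P u) - Q u * N u‖ ≤ ‖N u‖ * ‖P u‖ + ‖Q u‖ * ‖N u‖ := by
        refine (norm_sub_le _ _).trans ?_
        rw [norm_neg]
        exact add_le_add (norm_mul_le _ _) (norm_mul_le _ _)
    _ = (‖P u‖ + ‖Q u‖) * ‖N u‖ := by ring
    _ ≤ K * ‖N u‖ := by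
        gcongr
        exact (le_abs_self _).trans (hK u (Ico_subset_Icc_self hu))

section MinQuadForm

variable {n : Type*} [Fintype n]

/-- The minimum of `v ↦ vᵀ A v` over the unit sphere of the sup norm (junk value `0` when `n` is
empty). -/
noncomputable def minQuadForm (A : Matrix n n ℝ) : ℝ :=
  sInf ((fun v => v ⬝ᵥ A *ᵥ v) '' Metric.sphere (0 : n → ℝ) 1)

theorem continuous_minQuadForm : Continuous (minQuadForm : Matrix n n ℝ → ℝ) :=
  (isCompact_sphere 0 1).continuous_sInf
    (continuous_snd.dotProduct (continuous_fst.matrix_mulVec continuous_snd))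

theorem minQuadForm_mul_sq_le (A : Matrix n n ℝ) (v : n → ℝ) :
    minQuadForm A * ‖v‖ ^ 2 ≤ v ⬝ᵥ A *ᵥ v := by
  rcases eq_or_ne v 0 with rfl | hv
  · simp
  have hv' : 0 < ‖v‖ := norm_pos_iff.2 hv
  have hu : ‖v‖⁻¹ • v ∈ Metric.sphere (0 : n → ℝ) 1 := by
    simp [norm_smul, hv'.ne']
  have hbdd := ((isCompact_sphere (0 : n → ℝ) 1).image
    (f := fun v => v ⬝ᵥ A *ᵥ v)
    (continuous_id.dotProduct (continuous_const.matrix_mulVec continuous_id))).bddBelow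
  have hle := csInf_le hbdd (mem_image_of_mem (fun v => v ⬝ᵥ A *ᵥ v) hu)
  simp only [mulVec_smul, dotProduct_smul, smul_dotProduct, smul_eq_mul] at hle
  calc minQuadForm A * ‖v‖ ^ 2 ≤ ‖v‖⁻¹ * (‖v‖⁻¹ * (v ⬝ᵥ A *ᵥ v)) * ‖v‖ ^ 2 := by
        gcongr
        exact hle
    _ = v ⬝ᵥ A *ᵥ v := by field_simp

theorem exists_mem_sphere_minQuadForm_eq [Nonempty n] (A : Matrix n n ℝ) :
    ∃ v ∈ Metric.sphere (0 : n → ℝ) 1, v ⬝ᵥ A *ᵥ v = minQuadForm A := by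
  obtain ⟨v, hv, heq, -⟩ := (isCompact_sphere (0 : n → ℝ) 1).exists_sInf_image_eq_and_le
    (NormedSpace.sphere_nonempty.2 zero_le_one)
    (continuous_id.dotProduct (continuous_const.matrix_mulVec continuous_id)).continuousOn
  exact ⟨v, hv, heq.symm⟩

theorem posDef_iff_minQuadForm_pos [Nonempty n] {A : Matrix n n ℝ} (hA : A.IsHermitian) :
    A.PosDef ↔ 0 < minQuadForm A := by
  refine ⟨fun hpos => ?_, fun hpos => .of_dotProduct_mulVec_pos hA fun v hv => ?_⟩
  · obtain ⟨v, hv, heq⟩ := exists_mem_sphere_minQuadForm_eq A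
    simpa [heq] using hpos.dotProduct_mulVec_pos (ne_zero_of_mem_sphere one_ne_zero ⟨v, hv⟩)
  · rw [star_trivial]
    exact (mul_pos hpos (pow_pos (norm_pos_iff.2 hv) 2)).trans_le (minQuadForm_mul_sq_le A v)

theorem posSemidef_of_minQuadForm_nonneg {A : Matrix n n ℝ} (hA : A.IsHermitian)
    (h : 0 ≤ minQuadForm A) : A.PosSemidef :=
  .of_dotProduct_mulVec_nonneg hA fun v =>
    (mul_nonneg h (sq_nonneg _)).trans (by simpa using minQuadForm_mul_sq_le A v)

theorem posDef_of_isPreconnected [DecidableEq n] {X : Type*} [TopologicalSpace X] {s : Set X}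
    (hs : IsPreconnected s) {M : X → Matrix n n ℝ} (hM : ContinuousOn M s)
    (hherm : ∀ x ∈ s, (M x).IsHermitian) (hdet : ∀ x ∈ s, (M x).det ≠ 0) {a b : X}
    (ha : a ∈ s) (hb : b ∈ s) (hMa : (M a).PosDef) : (M b).PosDef := by
  rcases isEmpty_or_nonempty n with hn | hn
  · exact .of_dotProduct_mulVec_pos (hherm b hb) fun v hv => (hv (Subsingleton.elim v 0)).elim
  by_contra hMb
  rw [posDef_iff_minQuadForm_pos (hherm b hb), not_lt] at hMb
  obtain ⟨c, hc, hc0⟩ := hs.intermediate_value hb ha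
    (continuous_minQuadForm.comp_continuousOn hM)
    ⟨hMb, ((posDef_iff_minQuadForm_pos (hherm a ha)).1 hMa).le⟩
  have hpos : (M c).PosDef :=
    (posSemidef_of_minQuadForm_nonneg (hherm c hc) hc0.ge).posDef_iff_det_ne_zero.2 (hdet c hc)
  exact ((posDef_iff_minQuadForm_pos (hherm c hc)).1 hpos).ne' hc0

end MinQuadForm

section Lyapunov

variable {n : Type*} [Fintype n]

def SolvesLyapunovODE (B M : ℝ → Matrix n n ℝ) : Prop :=
  ∀ t ≥ (0:ℝ), ∀ i j, HasDerivWithinAt (fun s => M s i j)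
    ((-(M t * B t) - (B t)ᵀ * M t) i j) (Ici 0) t

variable {B M : ℝ → Matrix n n ℝ}

theorem SolvesLyapunovODE.continuousOn (hM : SolvesLyapunovODE B M) : ContinuousOn M (Ici 0) :=
  continuousOn_pi.2 fun i => continuousOn_pi.2 fun j t ht => (hM t ht i j).continuousWithinAt

-- The `L∞` operator norm is submultiplicative, as the Grönwall estimate requires.
open scoped Matrix.Norms.Operator in
theorem SolvesLyapunovODE.isSymm [DecidableEq n] (hM : SolvesLyapunovODE B M) (hB : Continuous B)
    (h0 : (M 0).IsSymm) {t : ℝ} (ht : 0 ≤ t) : (M t).IsSymm := by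
  have hN : ∀ t ≥ 0, HasDerivWithinAt (fun s => M s - (M s)ᵀ)
      (-((M t - (M t)ᵀ) * B t) - (B t)ᵀ * (M t - (M t)ᵀ)) (Ici 0) t := by
    intro t ht
    refine ((hasDerivWithinAt_matrix_iff.2 (hM t ht)).sub
      (hasDerivWithinAt_matrix_iff (f := fun s => (M s)ᵀ)
        (f' := (-(M t * B t) - (B t)ᵀ * M t)ᵀ).2 fun i j => hM t ht j i)).congr_deriv ?_
    simp only [transpose_sub, transpose_neg, transpose_mul, transpose_transpose, sub_mul,
      mul_sub]
    abel
  exact (sub_eq_zero.1 (eq_zero_of_hasDerivWithinAt_neg_mul_sub_mul hB hB.matrix_transpose hN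
    (sub_eq_zero.2 h0.eq.symm) ht)).symm

theorem SolvesLyapunovODE.det_eq [DecidableEq n] (hM : SolvesLyapunovODE B M)
    (hB : Continuous B) {t : ℝ} (ht : 0 ≤ t) :
    (M t).det = (M 0).det * exp (∫ s in (0:ℝ)..t, -2 * trace (B s)) := by
  refine eq_mul_exp_integral_of_hasDerivWithinAt (c := fun s => -2 * trace (B s))
    (continuous_const.mul hB.matrix_trace)
    (fun t ht => (hasDerivWithinAt_det (hM t ht)).congr_deriv ?_) ht
  rw [mul_sub, mul_neg, trace_sub, trace_neg, trace_adjugate_mul_mul,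
    trace_adjugate_mul_mul_self, trace_transpose]
  ring

end Lyapunov

theorem matrix_ode_posDef_special_general {m : ℕ}
    (B : ℝ → Matrix (Fin m) (Fin m) ℝ)
    (M : ℝ → Matrix (Fin m) (Fin m) ℝ) (M₀ : Matrix (Fin m) (Fin m) ℝ)
    (hBcont : ∀ i j, Continuous (fun t => B t i j))
    (hode : ∀ t ≥ (0:ℝ), ∀ i j, HasDerivWithinAt (fun s => M s i j)
      ((-(M t * B t) - (B t)ᵀ * M t) i j) (Set.Ici 0) t)
    (hM0 : M 0 = M₀)
    (hM₀pos : M₀.PosDef) :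
    ∀ t ≥ (0:ℝ), (M t).IsSymm ∧ (M t).PosDef := by
  subst hM0
  have hB : Continuous B := continuous_pi fun i => continuous_pi fun j => hBcont i j
  have hM : SolvesLyapunovODE B M := hode
  have hsymm : ∀ t ≥ (0:ℝ), (M t).IsSymm := fun t ht =>
    hM.isSymm hB (isHermitian_iff_isSymm.1 hM₀pos.isHermitian) ht
  refine fun t ht => ⟨hsymm t ht, posDef_of_isPreconnected isPreconnected_Ici hM.continuousOn
    (fun s hs => isHermitian_iff_isSymm.2 (hsymm s hs)) (fun s hs => ?_) (mem_Ici.2 le_rfl) ht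
    hM₀pos⟩
  rw [hM.det_eq hB hs]
  exact mul_ne_zero hM₀pos.det_pos.ne' (exp_pos _).ne'

/-- If `M' = −M B − Bᵀ M` with `B` continuous and bounded and `M(0) = M₀` symmetric
positive definite, then `M(t)` is symmetric positive definite for all `t ≥ 0`. -/
theorem matrix_ode_posDef_special {m : ℕ} (hm : 1 ≤ m)
    (B : ℝ → Matrix (Fin m) (Fin m) ℝ)
    (M : ℝ → Matrix (Fin m) (Fin m) ℝ) (M₀ : Matrix (Fin m) (Fin m) ℝ)
    (hBcont : ∀ i j, Continuous (fun t => B t i j))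
    (hBbdd : ∃ C : ℝ, ∀ t ≥ (0:ℝ), ∀ i j, |B t i j| ≤ C)
    (hode : ∀ t ≥ (0:ℝ), ∀ i j, HasDerivWithinAt (fun s => M s i j)
      ((-(M t * B t) - (B t)ᵀ * M t) i j) (Set.Ici 0) t)
    (hM0 : M 0 = M₀)
    (hM₀symm : M₀.IsSymm) (hM₀pos : M₀.PosDef) :
    ∀ t ≥ (0:ℝ), (M t).IsSymm ∧ (M t).PosDef :=
  matrix_ode_posDef_special_general B M M₀ hBcont hode hM0 hM₀pos
end

section
/- Let m ≥ 1, let M be an m×m real symmetric positive definite matrix, N an m×m real symmetric matrix, X, P ∈ ℝ^m, S ∈ ℝ, A ∈ ℂ. Let f : ℝ^m → ℂ be three times continuously differentiable with its third derivative uniformly bounded by L on ℝ^m. Then there exists C > 0 (depending on M, A, L, m but not on ε) such that for every ε > 0 and every x ∈ ℝ^m, | ( f(x) − f(X) − Df(X)(x−X) − ½ D²f(X)[x−X, x−X] ) · G^ε(M,N,X,P,S,A;x) | ≤ C · ε^{3/2}. -/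
open Matrix Complex

/-- The Gaussian beam
`G^ε(M,N,X,P,S,A;x) = A exp(−(x−X)ᵀ(M+iN)(x−X)/(2ε) + iPᵀ(x−X)/ε + iS/ε)`. -/
noncomputable def gaussianBeam {m : ℕ} (ε : ℝ) (M N : Matrix (Fin m) (Fin m) ℝ)
    (X P : EuclideanSpace ℝ (Fin m)) (S : ℝ) (A : ℂ)
    (x : EuclideanSpace ℝ (Fin m)) : ℂ :=
  A * Complex.exp (
    -((∑ i, ∑ j, ((M i j : ℂ) + Complex.I * (N i j : ℂ)) * ((x i - X i : ℝ) : ℂ)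
        * ((x j - X j : ℝ) : ℂ)) / (2 * (ε : ℂ)))
    + Complex.I * ((∑ i, P i * (x i - X i) : ℝ) : ℂ) / (ε : ℂ)
    + Complex.I * (S : ℂ) / (ε : ℂ))

/-!
The Taylor remainder is at most `L ‖x - X‖³`, by three successive mean value estimates (for the
second derivative, the first derivative and `f` itself). Positive definiteness of `M` gives
`c > 0` with `|G^ε(x)| ≤ |A| exp (-c ‖x - X‖² / (2ε))`, and
`t³ exp (-c t² / (2ε)) ≤ √(6 / c³) ε^{3/2}`: after squaring and substituting `y = c t² / ε`
this is `y³ e^{-y} ≤ 3!`.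
-/

section TaylorRemainder

variable {E F : Type*} [NormedAddCommGroup E] [NormedSpace ℝ E]
  [NormedAddCommGroup F] [NormedSpace ℝ F]

theorem norm_sub_le_of_norm_hasFDerivAt_le_pow {g : E → F} {g' : E → E →L[ℝ] F} {C : ℝ}
    {n : ℕ} {X : E} (hC : 0 ≤ C) (hg : ∀ z, HasFDerivAt g (g' z) z)
    (hbound : ∀ z, ‖g' z‖ ≤ C * ‖z - X‖ ^ n) (x : E) :
    ‖g x - g X‖ ≤ C * ‖x - X‖ ^ (n + 1) := by
  have hball : ∀ z ∈ Metric.closedBall X ‖x - X‖, ‖g' z‖ ≤ C * ‖x - X‖ ^ n := fun z hz =>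
    (hbound z).trans <| by gcongr; rwa [mem_closedBall_iff_norm] at hz
  calc ‖g x - g X‖ ≤ C * ‖x - X‖ ^ n * ‖x - X‖ :=
        (convex_closedBall X _).norm_image_sub_le_of_norm_hasFDerivWithin_le
          (fun z _ => (hg z).hasFDerivWithinAt) hball
          (Metric.mem_closedBall_self (norm_nonneg _)) (by simp [dist_eq_norm])
    _ = C * ‖x - X‖ ^ (n + 1) := by ring

theorem ContinuousLinearMap.hasFDerivAt_half_apply_sub_sub {B : E →L[ℝ] E →L[ℝ] F}
    (hB : ∀ v w, B v w = B w v) (X z : E) :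
    HasFDerivAt (fun w => (2 : ℝ)⁻¹ • B (w - X) (w - X)) (B (z - X)) z := by
  have hsub : HasFDerivAt (fun w : E => w - X) (ContinuousLinearMap.id ℝ E) z :=
    (hasFDerivAt_id z).sub_const X
  refine (((B.hasFDerivAt.comp z hsub).clm_apply hsub).const_smul (2 : ℝ)⁻¹).congr_fderiv ?_
  ext v
  simp [hB v z, hB v X]
  module

theorem norm_taylor_remainder_two_le {f : E → F} {L : ℝ} (hf : ContDiff ℝ 3 f)
    (hL : ∀ y, ‖iteratedFDeriv ℝ 3 f y‖ ≤ L) (X x : E) :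
    ‖f x - f X - fderiv ℝ f X (x - X) - (2 : ℝ)⁻¹ • iteratedFDeriv ℝ 2 f X ![x - X, x - X]‖
      ≤ L * ‖x - X‖ ^ 3 := by
  have hL0 : 0 ≤ L := (norm_nonneg _).trans (hL X)
  set Df := fderiv ℝ f
  set D2f := fderiv ℝ Df
  have hDf : ∀ z, HasFDerivAt f (Df z) z := fun z =>
    (hf.differentiable (by norm_num) z).hasFDerivAt
  have hD2f : ∀ z, HasFDerivAt Df (D2f z) z := fun z =>
    ((hf.fderiv_right (m := 2) (by norm_num)).differentiable (by norm_num) z).hasFDerivAt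
  have hD3f : ∀ z, HasFDerivAt D2f (fderiv ℝ D2f z) z := fun z =>
    (((hf.fderiv_right (m := 2) (by norm_num)).fderiv_right (m := 1) (by norm_num)).differentiable
      (by norm_num) z).hasFDerivAt
  have hD2f_lip : ∀ z, ‖D2f z - D2f X‖ ≤ L * ‖z - X‖ ^ 1 :=
    norm_sub_le_of_norm_hasFDerivAt_le_pow (n := 0) hL0 hD3f fun z => by
      simpa [D2f, Df, ← norm_iteratedFDeriv_fderiv, norm_iteratedFDeriv_zero] using hL z
  have hDf_taylor : ∀ y, ‖Df y - Df X - D2f X (y - X)‖ ≤ L * ‖y - X‖ ^ 2 := fun y => by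
    have := norm_sub_le_of_norm_hasFDerivAt_le_pow (g := fun w => Df w - D2f X w) hL0
      (fun z => (hD2f z).sub (D2f X).hasFDerivAt) hD2f_lip y
    rwa [map_sub, sub_sub_sub_comm]
  have hsymm : ∀ v w, D2f X v w = D2f X w v := hf.contDiffAt.isSymmSndFDerivAt (by norm_num)
  have := norm_sub_le_of_norm_hasFDerivAt_le_pow
    (g := fun w => f w - Df X w - (2 : ℝ)⁻¹ • D2f X (w - X) (w - X)) hL0
    (fun z => ((hDf z).sub (Df X).hasFDerivAt).sub
      ((D2f X).hasFDerivAt_half_apply_sub_sub hsymm X z)) hDf_taylor x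
  rw [iteratedFDeriv_two_apply]
  convert this using 2
  simp only [Matrix.cons_val_zero, Matrix.cons_val_one, sub_self, map_zero,
    smul_zero, sub_zero, map_sub]
  abel

end TaylorRemainder

theorem pow_mul_exp_neg_le_factorial {y : ℝ} (hy : 0 ≤ y) (n : ℕ) :
    y ^ n * Real.exp (-y) ≤ n.factorial := by
  rw [Real.exp_neg, ← div_eq_mul_inv, div_le_iff₀ (Real.exp_pos y), ← div_le_iff₀' (by positivity)]
  exact Real.pow_div_factorial_le_exp _ hy n

theorem cube_mul_exp_neg_sq_div_le {c ε : ℝ} (hc : 0 < c) (hε : 0 < ε) (t : ℝ) :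
    t ^ 3 * Real.exp (-(c * t ^ 2) / (2 * ε)) ≤ √(6 / c ^ 3) * ε ^ ((3 : ℝ) / 2) := by
  have hsq : (t ^ 3 * Real.exp (-(c * t ^ 2) / (2 * ε))) ^ 2 ≤ 6 / c ^ 3 * ε ^ 3 :=
    calc (t ^ 3 * Real.exp (-(c * t ^ 2) / (2 * ε))) ^ 2
        = (ε / c) ^ 3 * ((c * t ^ 2 / ε) ^ 3 * Real.exp (-(c * t ^ 2 / ε))) := by
          rw [mul_pow, ← Real.exp_nat_mul]
          field_simp
          ring_nf
      _ ≤ (ε / c) ^ 3 * Nat.factorial 3 := by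
          gcongr
          exact pow_mul_exp_neg_le_factorial (by positivity) 3
      _ = 6 / c ^ 3 * ε ^ 3 := by norm_num [Nat.factorial]; ring
  have hε32 : ε ^ ((3 : ℝ) / 2) = √(ε ^ 3) := by
    rw [Real.sqrt_eq_rpow, ← Real.rpow_natCast, ← Real.rpow_mul hε.le]
    norm_num
  calc _ ≤ |t ^ 3 * Real.exp (-(c * t ^ 2) / (2 * ε))| := le_abs_self _
    _ ≤ √(6 / c ^ 3 * ε ^ 3) := Real.abs_le_sqrt hsq
    _ = √(6 / c ^ 3) * ε ^ ((3 : ℝ) / 2) := by rw [Real.sqrt_mul (by positivity), hε32]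

theorem exists_pos_mul_norm_sq_le_of_pos {E : Type*} [NormedAddCommGroup E] [NormedSpace ℝ E]
    [ProperSpace E] {Q : E → ℝ} (hQ : Continuous Q) (hsmul : ∀ (r : ℝ) v, Q (r • v) = r ^ 2 * Q v)
    (hpos : ∀ v ≠ 0, 0 < Q v) : ∃ c > 0, ∀ v, c * ‖v‖ ^ 2 ≤ Q v := by
  have hQ0 : Q 0 = 0 := by simpa using hsmul 0 0
  rcases subsingleton_or_nontrivial E with hE | hE
  · exact ⟨1, one_pos, fun v => by simp [Subsingleton.elim v 0, hQ0]⟩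
  obtain ⟨u, hu, hmin⟩ := (isCompact_sphere (0 : E) 1).exists_isMinOn
    (NormedSpace.sphere_nonempty.2 zero_le_one) hQ.continuousOn
  refine ⟨Q u, hpos u (ne_zero_of_mem_unit_sphere ⟨u, hu⟩), fun v => ?_⟩
  rcases eq_or_ne v 0 with rfl | hv
  · simp [hQ0]
  have hv' : ‖v‖⁻¹ • v ∈ Metric.sphere (0 : E) 1 := by simp [norm_smul, hv]
  calc Q u * ‖v‖ ^ 2 ≤ Q (‖v‖⁻¹ • v) * ‖v‖ ^ 2 := by gcongr; exact hmin hv'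
    _ = Q v := by rw [hsmul]; field_simp

theorem Matrix.PosDef.exists_pos_mul_norm_sq_le {n : Type*} [Fintype n] {M : Matrix n n ℝ}
    (hM : M.PosDef) :
    ∃ c > 0, ∀ v : EuclideanSpace ℝ n, c * ‖v‖ ^ 2 ≤ ∑ i, ∑ j, M i j * v i * v j := by
  refine exists_pos_mul_norm_sq_le_of_pos (by fun_prop) (fun r v => ?_) (fun v hv => ?_)
  · simp only [PiLp.smul_apply, smul_eq_mul, Finset.mul_sum]
    refine Finset.sum_congr rfl fun i _ => Finset.sum_congr rfl fun j _ => ?_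
    ring
  · refine (hM.dotProduct_mulVec_pos (x := WithLp.ofLp v) (by simpa using hv)).trans_eq ?_
    simp only [star_trivial, dotProduct, mulVec, Finset.mul_sum]
    refine Finset.sum_congr rfl fun i _ => Finset.sum_congr rfl fun j _ => ?_
    ring

theorem norm_gaussianBeam {m : ℕ} (ε : ℝ) (M N : Matrix (Fin m) (Fin m) ℝ)
    (X P : EuclideanSpace ℝ (Fin m)) (S : ℝ) (A : ℂ) (x : EuclideanSpace ℝ (Fin m)) :
    ‖gaussianBeam ε M N X P S A x‖
      = ‖A‖ * Real.exp (-(∑ i, ∑ j, M i j * (x i - X i) * (x j - X j)) / (2 * ε)) := by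
  have h2ε : (2 : ℂ) * ε = ((2 * ε : ℝ) : ℂ) := by push_cast; ring
  rw [gaussianBeam, norm_mul, Complex.norm_exp, h2ε]
  congr 2
  simp only [Complex.add_re, Complex.neg_re, Complex.div_ofReal_re, Complex.re_sum, Complex.mul_re]
  simp [neg_div]

theorem norm_gaussianBeam_le {m : ℕ} {M : Matrix (Fin m) (Fin m) ℝ} {c ε : ℝ} (hε : 0 < ε)
    (hM : ∀ v : EuclideanSpace ℝ (Fin m), c * ‖v‖ ^ 2 ≤ ∑ i, ∑ j, M i j * v i * v j)
    (N : Matrix (Fin m) (Fin m) ℝ) (X P : EuclideanSpace ℝ (Fin m)) (S : ℝ) (A : ℂ)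
    (x : EuclideanSpace ℝ (Fin m)) :
    ‖gaussianBeam ε M N X P S A x‖ ≤ ‖A‖ * Real.exp (-(c * ‖x - X‖ ^ 2) / (2 * ε)) := by
  rw [norm_gaussianBeam]
  gcongr
  simpa using hM (x - X)

theorem gaussianBeam_taylor_remainder_general {m : ℕ}
    (M N : Matrix (Fin m) (Fin m) ℝ) (hMpos : M.PosDef)
    (X P : EuclideanSpace ℝ (Fin m)) (S : ℝ) (A : ℂ)
    (f : EuclideanSpace ℝ (Fin m) → ℂ) (L : ℝ) (hf : ContDiff ℝ 3 f)
    (hL : ∀ y : EuclideanSpace ℝ (Fin m), ‖iteratedFDeriv ℝ 3 f y‖ ≤ L) :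
    ∃ C : ℝ, 0 < C ∧ ∀ ε : ℝ, 0 < ε → ∀ x : EuclideanSpace ℝ (Fin m),
      ‖(f x - f X - fderiv ℝ f X (x - X)
          - (1 / 2 : ℂ) * iteratedFDeriv ℝ 2 f X ![x - X, x - X])
        * gaussianBeam ε M N X P S A x‖ ≤ C * ε ^ ((3 : ℝ) / 2) := by
  obtain ⟨c, hc, hM⟩ := hMpos.exists_pos_mul_norm_sq_le
  have hL0 : 0 ≤ L := (norm_nonneg _).trans (hL X)
  refine ⟨L * ‖A‖ * √(6 / c ^ 3) + 1, by positivity, fun ε hε x => ?_⟩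
  have hR := norm_taylor_remainder_two_le hf hL X x
  rw [Complex.real_smul, ofReal_inv, ofReal_ofNat, ← one_div] at hR
  calc _ ≤ L * ‖x - X‖ ^ 3 * (‖A‖ * Real.exp (-(c * ‖x - X‖ ^ 2) / (2 * ε))) := by
        rw [norm_mul]
        exact mul_le_mul hR (norm_gaussianBeam_le hε hM N X P S A x) (norm_nonneg _)
          (by positivity)
    _ = L * ‖A‖ * (‖x - X‖ ^ 3 * Real.exp (-(c * ‖x - X‖ ^ 2) / (2 * ε))) := by ring
    _ ≤ L * ‖A‖ * (√(6 / c ^ 3) * ε ^ ((3 : ℝ) / 2)) :=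
        mul_le_mul_of_nonneg_left (cube_mul_exp_neg_sq_div_le hc hε _) (by positivity)
    _ ≤ (L * ‖A‖ * √(6 / c ^ 3) + 1) * ε ^ ((3 : ℝ) / 2) := by
        rw [← mul_assoc]
        gcongr
        linarith

/-- Multiplying the second-order Taylor remainder of a `C³` function `f` (with bounded
third derivative) by the Gaussian beam gives a quantity of size `O(ε^{3/2})`. -/
theorem gaussianBeam_taylor_remainder {m : ℕ} (hm : 1 ≤ m)
    (M N : Matrix (Fin m) (Fin m) ℝ) (hMsymm : M.IsSymm) (hMpos : M.PosDef)
    (hNsymm : N.IsSymm) (X P : EuclideanSpace ℝ (Fin m)) (S : ℝ) (A : ℂ)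
    (f : EuclideanSpace ℝ (Fin m) → ℂ) (L : ℝ) (hf : ContDiff ℝ 3 f)
    (hL : ∀ y : EuclideanSpace ℝ (Fin m), ‖iteratedFDeriv ℝ 3 f y‖ ≤ L) :
    ∃ C : ℝ, 0 < C ∧ ∀ ε : ℝ, 0 < ε → ∀ x : EuclideanSpace ℝ (Fin m),
      ‖(f x - f X - fderiv ℝ f X (x - X)
          - (1 / 2 : ℂ) * iteratedFDeriv ℝ 2 f X ![x - X, x - X])
        * gaussianBeam ε M N X P S A x‖ ≤ C * ε ^ ((3 : ℝ) / 2) :=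
  gaussianBeam_taylor_remainder_general M N hMpos X P S A f L hf hL
end

section
/- Let K ≥ 1, let a₁,…,a_K : ℝ → ℝ be continuous, and let μ₀, μ₁,…,μ_K : ℝ → ℝ be continuous. Define F₀(t) = exp( ∫₀ᵗ μ₀(s) ds ) and, recursively for k = 1,…,K, F_k(t) = ∫₀ᵗ F_{k−1}(s) · a_k(s) · exp( ∫ₛᵗ μ_k(r) dr ) ds. Then for every t ≥ 0, F_K(t) = ∫_{0 ≤ t₁ ≤ ⋯ ≤ t_K ≤ t} ( ∏_{k=1}^{K} a_k(t_k) ) · exp( Σ_{k=0}^{K} ∫_{t_k}^{t_{k+1}} μ_k(s) ds ) dt₁ ⋯ dt_K, where by convention t₀ = 0 and t_{K+1} = t. -/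
/-- The iterated integral `∫_{S_t^K} g(t₁,…,t_K) dt₁⋯dt_K` over the simplex
`S_t^K = {0 ≤ t₁ ≤ ⋯ ≤ t_K ≤ t}`, defined recursively on the outermost variable. -/
noncomputable def simplexIntegralR : (K : ℕ) → ((Fin K → ℝ) → ℝ) → ℝ → ℝ
  | 0, g, _ => g (fun i => i.elim0)
  | K + 1, g, t => ∫ s in (0:ℝ)..t, simplexIntegralR K (fun τ => g (Fin.snoc τ s)) s

/-- The recursion `F₀(t) = exp(∫₀ᵗ μ₀)`,
`F_k(t) = ∫₀ᵗ F_{k−1}(s) a_k(s) exp(∫ₛᵗ μ_k) ds`. -/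
noncomputable def jumpRec (a μ : ℕ → ℝ → ℝ) : ℕ → ℝ → ℝ
  | 0, t => Real.exp (∫ s in (0:ℝ)..t, μ 0 s)
  | k + 1, t => ∫ s in (0:ℝ)..t,
      jumpRec a μ k s * a (k + 1) s * Real.exp (∫ r in s..t, μ (k + 1) r)

/-- The extended time vector `(t₀, t₁, …, t_K, t_{K+1}) = (0, t₁, …, t_K, t)`. -/
def extTimes {K : ℕ} (τ : Fin K → ℝ) (t : ℝ) : Fin (K + 2) → ℝ :=
  Fin.snoc (Fin.cons 0 τ : Fin (K + 1) → ℝ) t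

/-! Both sides are built by the same recursion on the last jump time: appending `s` to
`(t₁, …, t_K)` splits the integrand into the `K`-jump integrand on `[0, s]` times
`a_{K+1}(s) exp(∫ₛᵗ μ_{K+1})`, so the two integrals agree pointwise in `s` and induction on `K`
closes the argument. -/

noncomputable def jumpDensity (a μ : ℕ → ℝ → ℝ) (K : ℕ) (t : ℝ) (τ : Fin K → ℝ) : ℝ :=
  (∏ k : Fin K, a ((k : ℕ) + 1) (τ k)) *
    Real.exp (∑ k : Fin (K + 1),
      ∫ s in (extTimes τ t k.castSucc)..(extTimes τ t k.succ), μ (k : ℕ) s)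

theorem simplexIntegralR_mul_const (c : ℝ) :
    ∀ (K : ℕ) (g : (Fin K → ℝ) → ℝ) (t : ℝ),
      simplexIntegralR K (fun τ => g τ * c) t = simplexIntegralR K g t * c
  | 0, _, _ => rfl
  | K + 1, g, t => by
    simp only [simplexIntegralR]
    rw [← intervalIntegral.integral_mul_const]
    exact intervalIntegral.integral_congr fun s _ => simplexIntegralR_mul_const c K _ s

@[simp]
theorem extTimes_zero {K : ℕ} (τ : Fin K → ℝ) (t : ℝ) : extTimes τ t 0 = 0 := by
  rw [extTimes, ← Fin.castSucc_zero, Fin.snoc_castSucc, Fin.cons_zero]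

@[simp]
theorem extTimes_last {K : ℕ} (τ : Fin K → ℝ) (t : ℝ) :
    extTimes τ t (Fin.last (K + 1)) = t :=
  Fin.snoc_last _ _

@[simp]
theorem extTimes_snoc_castSucc {K : ℕ} (σ : Fin K → ℝ) (s t : ℝ) (i : Fin (K + 2)) :
    extTimes (Fin.snoc σ s) t i.castSucc = extTimes σ s i := by
  simp [extTimes, Fin.cons_snoc_eq_snoc_cons]

theorem jumpDensity_zero (a μ : ℕ → ℝ → ℝ) (t : ℝ) (τ : Fin 0 → ℝ) :
    jumpDensity a μ 0 t τ = Real.exp (∫ s in (0:ℝ)..t, μ 0 s) := by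
  have h₁ : extTimes τ t 1 = t := extTimes_last τ t
  simp [jumpDensity, h₁]

theorem jumpDensity_snoc (a μ : ℕ → ℝ → ℝ) (K : ℕ) (t s : ℝ) (σ : Fin K → ℝ) :
    jumpDensity a μ (K + 1) t (Fin.snoc σ s) =
      jumpDensity a μ K s σ * (a (K + 1) s * Real.exp (∫ r in s..t, μ (K + 1) r)) := by
  rw [jumpDensity, jumpDensity, Fin.prod_univ_castSucc, Fin.sum_univ_castSucc, Real.exp_add]
  simp only [Fin.snoc_castSucc, Fin.snoc_last, Fin.val_last, Fin.val_castSucc,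
    Fin.succ_castSucc, Fin.succ_last, extTimes_snoc_castSucc, extTimes_last]
  ring

theorem jumpRec_eq_simplexIntegralR_jumpDensity (a μ : ℕ → ℝ → ℝ) :
    ∀ (K : ℕ) (t : ℝ), jumpRec a μ K t = simplexIntegralR K (jumpDensity a μ K t) t
  | 0, t => (jumpDensity_zero a μ t _).symm
  | K + 1, t => by
    rw [jumpRec, simplexIntegralR]
    congr 1
    funext s
    simp only [jumpDensity_snoc, simplexIntegralR_mul_const,
      jumpRec_eq_simplexIntegralR_jumpDensity a μ K s, mul_assoc]

theorem jumpRec_eq_simplexIntegral_general (K : ℕ)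
    (a μ : ℕ → ℝ → ℝ) :
    ∀ t ≥ (0:ℝ),
      jumpRec a μ K t =
        simplexIntegralR K
          (fun τ => (∏ k : Fin K, a ((k : ℕ) + 1) (τ k)) *
            Real.exp (∑ k : Fin (K + 1),
              ∫ s in (extTimes τ t k.castSucc)..(extTimes τ t k.succ), μ (k : ℕ) s))
          t :=
  fun t _ => jumpRec_eq_simplexIntegralR_jumpDensity a μ K t

/-- The appendix identity: the recursion `F_K` equals the explicit iterated integral
`∫_{0≤t₁≤⋯≤t_K≤t} (∏_{k=1}^K a_k(t_k)) exp(Σ_{k=0}^K ∫_{t_k}^{t_{k+1}} μ_k(s) ds) dt`,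
with the conventions `t₀ = 0` and `t_{K+1} = t`. -/
theorem jumpRec_eq_simplexIntegral (K : ℕ) (hK : 1 ≤ K)
    (a μ : ℕ → ℝ → ℝ) (ha : ∀ k, Continuous (a k)) (hμ : ∀ k, Continuous (μ k)) :
    ∀ t ≥ (0:ℝ),
      jumpRec a μ K t =
        simplexIntegralR K
          (fun τ => (∏ k : Fin K, a ((k : ℕ) + 1) (τ k)) *
            Real.exp (∑ k : Fin (K + 1),
              ∫ s in (extTimes τ t k.castSucc)..(extTimes τ t k.succ), μ (k : ℕ) s))
          t :=
  jumpRec_eq_simplexIntegral_general K a μ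
end
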